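/- arXiv:1204.5710 — 2 statements merged into one kernel-verified Lean document; each statement's English description precedes it below -/
import Mathlib

section
/- Let (X_1,Y_1), …, (X_n,Y_n) be i.i.d. pairs of finitely-valued random variables, and let F_x = f_x(X^n) and F_y = f_y(Y^n) for arbitrary functions f_x, f_y. Then H(F_x | F_y) ≥ I(X^n; F_x, F_y) − Σ_{i=1}^n I(X_i; F_y, Y^{i−1}), where Y^{i−1} = (Y_1, …, Y_{i−1}). -/
open scoped BigOperators

/-- A probability mass function on a finite type, real-valued. -/
structure FinPMF (α : Type) [Fintype α] where
  p : α → ℝ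
  nonneg : ∀ a, 0 ≤ p a
  sum_one : ∑ a, p a = 1

namespace FinPMF

variable {Ω : Type} [Fintype Ω]

/-- The distribution (pushforward pmf) of a finitely-valued random variable. -/
def dist {α : Type} [Fintype α] [DecidableEq α] (μ : FinPMF Ω) (X : Ω → α) (a : α) : ℝ :=
  ∑ ω, if X ω = a then μ.p ω else 0

/-- Shannon entropy `H(X)` (natural logarithm). -/
noncomputable def H {α : Type} [Fintype α] [DecidableEq α] (μ : FinPMF Ω) (X : Ω → α) : ℝ :=
  -∑ a, dist μ X a * Real.log (dist μ X a)

/-- Mutual information `I(X;Y)`. -/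
noncomputable def MI {α β : Type} [Fintype α] [DecidableEq α] [Fintype β] [DecidableEq β]
    (μ : FinPMF Ω) (X : Ω → α) (Y : Ω → β) : ℝ :=
  H μ X + H μ Y - H μ (fun ω => (X ω, Y ω))

/-- Conditional entropy `H(X|Y)`. -/
noncomputable def condH {α β : Type} [Fintype α] [DecidableEq α] [Fintype β] [DecidableEq β]
    (μ : FinPMF Ω) (X : Ω → α) (Y : Ω → β) : ℝ :=
  H μ (fun ω => (X ω, Y ω)) - H μ Y

/-- Conditional mutual information `I(X;Y|Z)`. -/
noncomputable def condMI {α β γ : Type} [Fintype α] [DecidableEq α] [Fintype β] [DecidableEq β]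
    [Fintype γ] [DecidableEq γ] (μ : FinPMF Ω) (X : Ω → α) (Y : Ω → β) (Z : Ω → γ) : ℝ :=
  condH μ X Z + condH μ Y Z - condH μ (fun ω => (X ω, Y ω)) Z

open scoped Classical in
/-- Probability of an event. -/
noncomputable def prob (μ : FinPMF Ω) (S : Ω → Prop) : ℝ :=
  ∑ ω, if S ω then μ.p ω else 0

/-- Conditional independence: `A` and `C` are conditionally independent given `B`
(the Markov chain `A ↔ B ↔ C`). -/
def CondIndep {α β γ : Type} [Fintype α] [DecidableEq α] [Fintype β] [DecidableEq β]
    [Fintype γ] [DecidableEq γ] (μ : FinPMF Ω) (A : Ω → α) (B : Ω → β) (C : Ω → γ) : Prop :=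
  ∀ a b c, dist μ (fun ω => (A ω, B ω, C ω)) (a, b, c) * dist μ B b =
    dist μ (fun ω => (A ω, B ω)) (a, b) * dist μ (fun ω => (B ω, C ω)) (b, c)

/-- The i.i.d. product pmf on `Fin n → Ω`. -/
def iid (μ : FinPMF Ω) (n : ℕ) : FinPMF (Fin n → Ω) where
  p := fun ω => ∏ i, μ.p (ω i)
  nonneg := fun ω => Finset.prod_nonneg fun i _ => μ.nonneg _
  sum_one := by
    have h := Finset.prod_univ_sum (fun _ : Fin n => (Finset.univ : Finset Ω))
      (fun _ a => μ.p a)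
    rw [Fintype.piFinset_univ] at h
    rw [← h]
    simp [μ.sum_one]

/-- The product of two pmfs. -/
def prodPMF {α β : Type} [Fintype α] [Fintype β] (μ : FinPMF α) (ν : FinPMF β) :
    FinPMF (α × β) where
  p := fun ab => μ.p ab.1 * ν.p ab.2
  nonneg := fun ab => mul_nonneg (μ.nonneg _) (ν.nonneg _)
  sum_one := by
    rw [Fintype.sum_prod_type]
    simp_rw [← Finset.mul_sum, ν.sum_one, mul_one]
    exact μ.sum_one

/-- The uniform pmf on a nonempty finite type. -/
noncomputable def uniform (α : Type) [Fintype α] (h : Nonempty α) : FinPMF α where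
  p := fun _ => (Fintype.card α : ℝ)⁻¹
  nonneg := fun _ => by positivity
  sum_one := by
    have hc : (0:ℝ) < Fintype.card α := by
      exact_mod_cast Fintype.card_pos_iff.mpr h
    simp only [Finset.sum_const, Finset.card_univ, nsmul_eq_mul]
    field_simp

/-- The pushforward pmf of a random variable. -/
def push {α : Type} [Fintype α] [DecidableEq α] (μ : FinPMF Ω) (X : Ω → α) : FinPMF α where
  p := dist μ X
  nonneg := fun a => Finset.sum_nonneg fun ω _ => by
    split <;> simp [μ.nonneg]
  sum_one := by
    unfold dist
    rw [Finset.sum_comm]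
    simp [μ.sum_one]

end FinPMF

/-!
Split `I(X^n; F_x, F_y) = I(X^n; F_y) + I(X^n; F_x | F_y)`; the second term is at most
`H(F_x | F_y)`, so it suffices to show `I(X^n; F_y) ≤ ∑ᵢ I(X_i; F_y, Y^{i-1})`. Telescoping
along the prefixes `X^i`, each increment is
`I(X^i; F_y) - I(X^{i-1}; F_y) = H(X_i | X^{i-1}) - H(X_i | X^{i-1}, F_y)
  ≤ H(X_i) - H(X_i | F_y, Y^{i-1}, X^{i-1}) = I(X_i; F_y, Y^{i-1})`,
where the last step holds because `X_i` and `X^{i-1}` are conditionally independent given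
`(F_y, Y^{i-1})`: the pairs before `i` are independent of those from `i` on, and `F_y` is a
function of `Y^{i-1}` and the latter. The entropy inequalities all reduce to Gibbs' inequality.
-/

lemma Real.sum_mul_log_le_sum_mul_log {ι : Type*} [Fintype ι] {p r : ι → ℝ} (hp : ∀ i, 0 ≤ p i)
    (hr : ∀ i, 0 ≤ r i) (hpr : ∀ i, 0 < p i → 0 < r i) (hsum : ∑ i, r i ≤ ∑ i, p i) :
    ∑ i, p i * Real.log (r i) ≤ ∑ i, p i * Real.log (p i) := by
  have key : ∀ i, p i * Real.log (r i) - p i * Real.log (p i) ≤ r i - p i := by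
    intro i
    rcases (hp i).eq_or_lt with h | h
    · simp [← h, hr i]
    calc p i * Real.log (r i) - p i * Real.log (p i) = p i * Real.log (r i / p i) := by
          rw [Real.log_div (hpr i h).ne' h.ne']; ring
      _ ≤ p i * (r i / p i - 1) :=
          mul_le_mul_of_nonneg_left (Real.log_le_sub_one_of_pos (div_pos (hpr i h) h)) h.le
      _ = r i - p i := by field_simp
  have hkey := Finset.sum_le_sum fun i (_ : i ∈ Finset.univ) => key i
  rw [Finset.sum_sub_distrib, Finset.sum_sub_distrib] at hkey
  linarith

namespace FinPMF

variable {Ω α β γ δ : Type} [Fintype Ω] {μ : FinPMF Ω}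
  [Fintype α] [DecidableEq α] [Fintype β] [DecidableEq β]
  [Fintype γ] [DecidableEq γ] [Fintype δ] [DecidableEq δ]

lemma dist_nonneg (X : Ω → α) (a : α) : 0 ≤ dist μ X a := (push μ X).nonneg a

lemma sum_dist (X : Ω → α) : ∑ a, dist μ X a = 1 := (push μ X).sum_one

lemma dist_comp (X : Ω → α) (g : α → β) (b : β) :
    dist μ (fun ω => g (X ω)) b = ∑ a, if g a = b then dist μ X a else 0 := by
  unfold dist
  rw [← Finset.sum_fiberwise Finset.univ X]
  refine Finset.sum_congr rfl fun a _ => ?_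
  rw [Finset.sum_filter]
  split_ifs with h
  · exact Finset.sum_congr rfl fun ω _ => by split_ifs <;> simp_all
  · exact Finset.sum_eq_zero fun ω _ => by split_ifs <;> simp_all

lemma dist_le_dist_comp (X : Ω → α) (g : α → β) (a : α) :
    dist μ X a ≤ dist μ (fun ω => g (X ω)) (g a) := by
  rw [dist_comp X g]
  calc dist μ X a = if g a = g a then dist μ X a else 0 := (if_pos rfl).symm
    _ ≤ _ := Finset.single_le_sum (f := fun a' => if g a' = g a then dist μ X a' else 0)
        (fun a' _ => by split_ifs <;> simp [dist_nonneg]) (Finset.mem_univ a)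

lemma dist_comp_equiv (X : Ω → α) (e : α ≃ β) (b : β) :
    dist μ (fun ω => e (X ω)) b = dist μ X (e.symm b) := by
  simp only [dist, ← Equiv.eq_symm_apply]

lemma dist_comp_pos {X : Ω → α} {a : α} (g : α → β) (h : 0 < dist μ X a) :
    0 < dist μ (fun ω => g (X ω)) (g a) :=
  h.trans_le (dist_le_dist_comp X g a)

lemma sum_dist_pair_left (A : Ω → α) (B : Ω → β) (b : β) :
    ∑ a, dist μ (fun ω => (A ω, B ω)) (a, b) = dist μ B b := by
  rw [show dist μ B b = dist μ (fun ω => (A ω, B ω).2) b from rfl, dist_comp,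
    Fintype.sum_prod_type]
  simp

lemma sum_dist_pair_right (A : Ω → α) (B : Ω → β) (a : α) :
    ∑ b, dist μ (fun ω => (A ω, B ω)) (a, b) = dist μ A a := by
  rw [show dist μ A a = dist μ (fun ω => (A ω, B ω).1) a from rfl, dist_comp,
    Fintype.sum_prod_type, Finset.sum_eq_single a (fun x _ hx => by simp [hx]) (by simp)]
  simp

lemma dist_pair_eq_sum_dist_triple (A : Ω → α) (B : Ω → β) (C : Ω → γ) (a : α) (b : β) :
    dist μ (fun ω => (A ω, B ω)) (a, b) = ∑ c, dist μ (fun ω => (A ω, B ω, C ω)) (a, b, c) := by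
  calc dist μ (fun ω => (A ω, B ω)) (a, b)
      = ∑ t : α × β × γ, if (t.1, t.2.1) = (a, b) then dist μ (fun ω => (A ω, B ω, C ω)) t
          else 0 := dist_comp (fun ω => (A ω, B ω, C ω)) (fun t => (t.1, t.2.1)) _
    _ = _ := by
      rw [Fintype.sum_prod_type, Finset.sum_eq_single a (fun x _ hx => by simp [hx]) (by simp),
        Fintype.sum_prod_type, Finset.sum_eq_single b (fun x _ hx => by simp [hx]) (by simp)]
      simp

lemma H_comp_eq_sum (X : Ω → α) (g : α → β) :
    H μ (fun ω => g (X ω)) = -∑ a, dist μ X a * Real.log (dist μ (fun ω => g (X ω)) (g a)) := by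
  simp only [H, dist_comp X g, Finset.sum_mul, ite_mul, zero_mul]
  rw [Finset.sum_comm]
  simp +contextual [Finset.sum_ite_eq]

lemma H_comp_le (X : Ω → α) (g : α → β) : H μ (fun ω => g (X ω)) ≤ H μ X := by
  rw [H_comp_eq_sum, H, neg_le_neg_iff]
  refine Finset.sum_le_sum fun a _ => ?_
  rcases (dist_nonneg (μ := μ) X a).eq_or_lt with h | h
  · simp [← h]
  · exact mul_le_mul_of_nonneg_left (Real.log_le_log h (dist_le_dist_comp X g a)) h.le

lemma H_eq_of_comp {X : Ω → α} {Y : Ω → β} (f : α → β) (g : β → α)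
    (hY : ∀ ω, Y ω = f (X ω)) (hX : ∀ ω, X ω = g (Y ω)) : H μ X = H μ Y := by
  have hY' : Y = fun ω => f (X ω) := funext hY
  have hX' : X = fun ω => g (Y ω) := funext hX
  exact le_antisymm (hX' ▸ H_comp_le Y g) (hY' ▸ H_comp_le X f)

lemma H_eq_zero_of_unique [Unique α] (X : Ω → α) : H μ X = 0 := by
  have h : dist μ X default = 1 := by rw [← sum_dist X, Fintype.sum_unique]
  simp [H, h]

section Triple

variable (A : Ω → α) (B : Ω → β) (C : Ω → γ)

lemma H_pair_add_H_pair_sub_eq :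
    H μ (fun ω => (A ω, B ω)) + H μ (fun ω => (B ω, C ω))
        - (H μ (fun ω => (A ω, B ω, C ω)) + H μ B) =
      ∑ t, dist μ (fun ω => (A ω, B ω, C ω)) t * Real.log (dist μ (fun ω => (A ω, B ω, C ω)) t)
      - ∑ t, dist μ (fun ω => (A ω, B ω, C ω)) t *
        (Real.log (dist μ (fun ω => (A ω, B ω)) (t.1, t.2.1))
          + Real.log (dist μ (fun ω => (B ω, C ω)) t.2) - Real.log (dist μ B t.2.1)) := by
  let T := fun ω => (A ω, B ω, C ω)
  have hAB : H μ (fun ω => (A ω, B ω)) = -∑ t, dist μ T t *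
      Real.log (dist μ (fun ω => (A ω, B ω)) (t.1, t.2.1)) :=
    H_comp_eq_sum T fun t => (t.1, t.2.1)
  have hBC : H μ (fun ω => (B ω, C ω)) = -∑ t, dist μ T t *
      Real.log (dist μ (fun ω => (B ω, C ω)) t.2) := H_comp_eq_sum T Prod.snd
  have hB : H μ B = -∑ t, dist μ T t * Real.log (dist μ B t.2.1) :=
    H_comp_eq_sum T fun t => t.2.1
  rw [hAB, hBC, hB, H]
  simp only [mul_add, mul_sub, Finset.sum_add_distrib, Finset.sum_sub_distrib]
  ring

/-- Gibbs' inequality, comparing the joint law of `(A, B, C)` with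
`P(a, b) P(b, c) / P(b)`, which also has total mass one. -/
lemma H_triple_add_H_le :
    H μ (fun ω => (A ω, B ω, C ω)) + H μ B ≤
      H μ (fun ω => (A ω, B ω)) + H μ (fun ω => (B ω, C ω)) := by
  set P := dist μ (fun ω => (A ω, B ω, C ω))
  set r : α × β × γ → ℝ := fun t => dist μ (fun ω => (A ω, B ω)) (t.1, t.2.1) *
    dist μ (fun ω => (B ω, C ω)) t.2 / dist μ B t.2.1
  have hpos : ∀ t, 0 < P t → 0 < r t := fun t ht => div_pos
    (mul_pos (dist_comp_pos (fun t => (t.1, t.2.1)) ht) (dist_comp_pos Prod.snd ht))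
    (dist_comp_pos (fun t => t.2.1) ht)
  have hr_sum : ∑ t, r t = ∑ t, P t := by
    rw [show ∑ t, P t = 1 from sum_dist _]
    simp only [r, Fintype.sum_prod_type]
    rw [Finset.sum_comm, ← sum_dist B]
    refine Finset.sum_congr rfl fun b _ => ?_
    simp only [← Finset.sum_div, ← Finset.sum_mul_sum, sum_dist_pair_left, sum_dist_pair_right]
    exact mul_self_div_self _
  have hlog : ∀ t, P t * Real.log (r t) =
      P t * (Real.log (dist μ (fun ω => (A ω, B ω)) (t.1, t.2.1))
        + Real.log (dist μ (fun ω => (B ω, C ω)) t.2) - Real.log (dist μ B t.2.1)) := by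
    intro t
    rcases (dist_nonneg (μ := μ) (fun ω => (A ω, B ω, C ω)) t).eq_or_lt with h | h
    · simp [P, ← h]
    have hB : 0 < dist μ B t.2.1 := dist_comp_pos (fun t => t.2.1) h
    have hAB : 0 < dist μ (fun ω => (A ω, B ω)) (t.1, t.2.1) :=
      dist_comp_pos (fun t => (t.1, t.2.1)) h
    have hBC : 0 < dist μ (fun ω => (B ω, C ω)) t.2 := dist_comp_pos Prod.snd h
    simp only [r]
    rw [Real.log_div (mul_pos hAB hBC).ne' hB.ne', Real.log_mul hAB.ne' hBC.ne']
  have hgibbs := Real.sum_mul_log_le_sum_mul_log (dist_nonneg _)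
    (fun t => div_nonneg (mul_nonneg (dist_nonneg _ _) (dist_nonneg _ _)) (dist_nonneg _ _))
    hpos hr_sum.le
  rw [Finset.sum_congr rfl fun t _ => hlog t] at hgibbs
  linarith [H_pair_add_H_pair_sub_eq (μ := μ) A B C]

lemma H_triple_add_H_eq_of_condIndep (h : CondIndep μ A B C) :
    H μ (fun ω => (A ω, B ω, C ω)) + H μ B =
      H μ (fun ω => (A ω, B ω)) + H μ (fun ω => (B ω, C ω)) := by
  suffices hterm : ∀ t, dist μ (fun ω => (A ω, B ω, C ω)) t *
      Real.log (dist μ (fun ω => (A ω, B ω, C ω)) t) =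
      dist μ (fun ω => (A ω, B ω, C ω)) t * (Real.log (dist μ (fun ω => (A ω, B ω)) (t.1, t.2.1))
        + Real.log (dist μ (fun ω => (B ω, C ω)) t.2) - Real.log (dist μ B t.2.1)) by
    linarith [H_pair_add_H_pair_sub_eq (μ := μ) A B C,
      Finset.sum_congr rfl fun t (_ : t ∈ Finset.univ) => hterm t]
  rintro ⟨a, b, c⟩
  rcases (dist_nonneg (μ := μ) (fun ω => (A ω, B ω, C ω)) (a, b, c)).eq_or_lt with hP | hP
  · simp [← hP]
  have hB : 0 < dist μ B b := dist_comp_pos (fun t => t.2.1) hP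
  have hAB : 0 < dist μ (fun ω => (A ω, B ω)) (a, b) := dist_comp_pos (fun t => (t.1, t.2.1)) hP
  have hBC : 0 < dist μ (fun ω => (B ω, C ω)) (b, c) := dist_comp_pos Prod.snd hP
  have hlog := congrArg Real.log (h a b c)
  rw [Real.log_mul hP.ne' hB.ne', Real.log_mul hAB.ne' hBC.ne'] at hlog
  dsimp only
  rw [← hlog]
  ring

end Triple

lemma condH_pair_le (A : Ω → α) (B : Ω → β) (C : Ω → γ) :
    condH μ A (fun ω => (B ω, C ω)) ≤ condH μ A B := by
  have := H_triple_add_H_le (μ := μ) A B C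
  unfold condH
  linarith

lemma condH_pair_eq_of_condIndep {A : Ω → α} {B : Ω → β} {C : Ω → γ} (h : CondIndep μ A B C) :
    condH μ A (fun ω => (B ω, C ω)) = condH μ A B := by
  have := H_triple_add_H_eq_of_condIndep A B C h
  unfold condH
  linarith

lemma condH_le_condH_comp (A : Ω → α) (B : Ω → β) (g : β → γ) :
    condH μ A B ≤ condH μ A (fun ω => g (B ω)) := by
  have h := condH_pair_le (μ := μ) A (fun ω => g (B ω)) B
  have h1 : H μ (fun ω => (A ω, g (B ω), B ω)) = H μ (fun ω => (A ω, B ω)) :=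
    H_eq_of_comp (fun x => (x.1, x.2.2)) (fun x => (x.1, g x.2, x.2)) (fun _ => rfl) (fun _ => rfl)
  have h2 : H μ (fun ω => (g (B ω), B ω)) = H μ B :=
    H_eq_of_comp Prod.snd (fun b => (g b, b)) (fun _ => rfl) (fun _ => rfl)
  unfold condH at *
  linarith

lemma condH_le_H (A : Ω → α) (B : Ω → β) : condH μ A B ≤ H μ A := by
  have h := condH_le_condH_comp (μ := μ) A B (fun _ => ())
  have h1 : H μ (fun ω => (A ω, ())) = H μ A :=
    H_eq_of_comp Prod.fst (fun a => (a, ())) (fun _ => rfl) (fun _ => rfl)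
  unfold condH at h
  rw [h1, H_eq_zero_of_unique (fun _ : Ω => ()), sub_zero] at h
  exact h

lemma MI_eq_of_comp {X : Ω → α} {X' : Ω → β} (f : α → β) (g : β → α)
    (hX' : ∀ ω, X' ω = f (X ω)) (hX : ∀ ω, X ω = g (X' ω)) (B : Ω → γ) :
    MI μ X B = MI μ X' B := by
  unfold MI
  rw [H_eq_of_comp f g hX' hX, H_eq_of_comp (X := fun ω => (X ω, B ω))
    (Y := fun ω => (X' ω, B ω)) (fun p => (f p.1, p.2)) (fun p => (g p.1, p.2))
    (fun ω => by rw [hX']) (fun ω => by rw [hX])]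

lemma MI_eq_zero_of_unique [Unique α] (A : Ω → α) (B : Ω → β) : MI μ A B = 0 := by
  unfold MI
  rw [H_eq_zero_of_unique, H_eq_of_comp Prod.snd (fun b => ((default : α), b)) (fun _ => rfl)
    (fun _ => Prod.ext (Subsingleton.elim _ _) rfl)]
  ring

lemma MI_pair_sub_MI_le_of_condIndep {A : Ω → α} {B : Ω → β} {C : Ω → γ} {D : Ω → δ}
    (h : CondIndep μ A (fun ω => (B ω, C ω)) D) :
    MI μ (fun ω => (A ω, D ω)) B - MI μ D B ≤ MI μ A (fun ω => (B ω, C ω)) := by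
  have hD := condH_le_H (μ := μ) A D
  have hDB := condH_le_condH_comp (μ := μ) A (fun ω => ((B ω, C ω), D ω)) (fun x => (x.2, x.1.1))
  have hBC := condH_pair_eq_of_condIndep h
  have hassoc : H μ (fun ω => ((A ω, D ω), B ω)) = H μ (fun ω => (A ω, D ω, B ω)) :=
    H_eq_of_comp (fun x => (x.1.1, x.1.2, x.2)) (fun x => ((x.1, x.2.1), x.2.2))
      (fun _ => rfl) (fun _ => rfl)
  unfold MI
  unfold condH at hD hDB hBC
  linarith

lemma MI_comp_pair_sub_MI_le_condH (X : Ω → α) (f : α → β) (B : Ω → γ) :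
    MI μ X (fun ω => (f (X ω), B ω)) - MI μ X B ≤ condH μ (fun ω => f (X ω)) B := by
  have := H_comp_le (μ := μ) (fun ω => (X ω, f (X ω), B ω)) fun x => (x.1, x.2.2)
  unfold MI condH
  linarith

lemma condIndep_of_factorization {A : Ω → α} {B : Ω → β} {C : Ω → γ} (F : α → β → ℝ)
    (G : β → γ → ℝ) (hFG : ∀ a b c, dist μ (fun ω => (A ω, B ω, C ω)) (a, b, c) = F a b * G b c) :
    CondIndep μ A B C := by
  intro a b c
  have hAB : dist μ (fun ω => (A ω, B ω)) (a, b) = F a b * ∑ c, G b c := by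
    simp only [dist_pair_eq_sum_dist_triple A B C, hFG, Finset.mul_sum]
  have hBC : dist μ (fun ω => (B ω, C ω)) (b, c) = (∑ a, F a b) * G b c := by
    simp only [← sum_dist_pair_left A (fun ω => (B ω, C ω)), hFG, Finset.sum_mul]
  have hB : dist μ B b = (∑ a, F a b) * ∑ c, G b c := by
    simp only [← sum_dist_pair_right B C, ← sum_dist_pair_left A (fun ω => (B ω, C ω)), hFG,
      Finset.sum_mul_sum]
    exact Finset.sum_comm
  rw [hFG, hAB, hBC, hB]
  ring

lemma condIndep_of_dist_pair_eq_mul {ε ζ : Type} [Fintype ε] [DecidableEq ε] [Fintype ζ]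
    [DecidableEq ζ] {U : Ω → α} {V : Ω → β} (p : α → ℝ) (r : β → ℝ)
    (hUV : ∀ u v, dist μ (fun ω => (U ω, V ω)) (u, v) = p u * r v)
    (f : β → γ) (h : α → δ) (k : δ → β → ε) (g : α → ζ) :
    CondIndep μ (fun ω => f (V ω)) (fun ω => (k (h (U ω)) (V ω), h (U ω))) (fun ω => g (U ω)) := by
  refine condIndep_of_factorization
    (fun a b => ∑ v, if f v = a ∧ k b.2 v = b.1 then r v else 0)
    (fun b c => ∑ u, if h u = b.2 ∧ g u = c then p u else 0) fun a b c => ?_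
  calc dist μ (fun ω => (f (V ω), (k (h (U ω)) (V ω), h (U ω)), g (U ω))) (a, b, c)
      = ∑ x : α × β, if (f x.2, (k (h x.1) x.2, h x.1), g x.1) = (a, b, c) then
          dist μ (fun ω => (U ω, V ω)) x else 0 :=
        dist_comp (fun ω => (U ω, V ω)) (fun x => (f x.2, (k (h x.1) x.2, h x.1), g x.1)) _
    _ = _ := by
      rw [Fintype.sum_prod_type, Finset.sum_mul_sum, Finset.sum_comm]
      refine Finset.sum_congr rfl fun v _ => Finset.sum_congr rfl fun u _ => ?_
      rw [hUV]
      obtain ⟨b₁, b₂⟩ := b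
      by_cases hu : h u = b₂
      · subst hu
        simp only [Prod.mk.injEq, and_true, true_and, ite_and]
        split_ifs <;> ring
      · simp [hu]

lemma condIndep_coord_of_dist_eq_prod {𝒳 𝒴 : Type} [Fintype 𝒳] [DecidableEq 𝒳] [Fintype 𝒴]
    [DecidableEq 𝒴] {n : ℕ} {X : Ω → Fin n → 𝒳} {Y : Ω → Fin n → 𝒴} (w : 𝒳 × 𝒴 → ℝ)
    (hiid : ∀ s : Fin n → 𝒳 × 𝒴, dist μ (fun ω => fun i => (X ω i, Y ω i)) s = ∏ i, w (s i))
    (fy : (Fin n → 𝒴) → β) (i : Fin n) :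
    CondIndep μ (fun ω => X ω i) (fun ω => (fy (Y ω), Fin.take i i.isLt.le (Y ω)))
      (fun ω => Fin.take i i.isLt.le (X ω)) := by
  let e := Equiv.piEquivPiSubtypeProd (fun j : Fin n => j < i) fun _ => 𝒳 × 𝒴
  have hsplit : ∀ u v, dist μ (fun ω => e (fun j => (X ω j, Y ω j))) (u, v) =
      (∏ j, w (u j)) * ∏ j, w (v j) := by
    intro u v
    rw [dist_comp_equiv, hiid, ← Fintype.prod_subtype_mul_prod_subtype (fun j : Fin n => j < i)]
    simp only [e, Equiv.piEquivPiSubtypeProd_symm_apply]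
    congr 1
    · exact Finset.prod_congr rfl fun j _ => by rw [dif_pos j.2]
    · exact Finset.prod_congr rfl fun j _ => by rw [dif_neg j.2]
  have key := condIndep_of_dist_pair_eq_mul _ _ hsplit (fun v => (v ⟨i, lt_irrefl i⟩).1)
    (fun u (j : Fin i) => (u ⟨Fin.castLE i.isLt.le j, j.isLt⟩).2)
    (fun y v => fy fun j => if hj : j < i then y ⟨j, hj⟩ else (v ⟨j, hj⟩).2)
    (fun u (j : Fin i) => (u ⟨Fin.castLE i.isLt.le j, j.isLt⟩).1)
  convert key using 3 with ω
  · congr 1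
    funext j
    split_ifs <;> rfl
  all_goals rfl

lemma MI_le_sum_MI_of_dist_eq_prod {𝒳 𝒴 : Type} [Fintype 𝒳] [DecidableEq 𝒳] [Fintype 𝒴]
    [DecidableEq 𝒴] {n : ℕ} {X : Ω → Fin n → 𝒳} {Y : Ω → Fin n → 𝒴} (w : 𝒳 × 𝒴 → ℝ)
    (hiid : ∀ s : Fin n → 𝒳 × 𝒴, dist μ (fun ω => fun i => (X ω i, Y ω i)) s = ∏ i, w (s i))
    (fy : (Fin n → 𝒴) → β) :
    MI μ X (fun ω => fy (Y ω)) ≤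
      ∑ i : Fin n, MI μ (fun ω => X ω i) (fun ω => (fy (Y ω), Fin.take i i.isLt.le (Y ω))) := by
  let F : ℕ → ℝ := fun k =>
    if hk : k ≤ n then MI μ (fun ω => Fin.take k hk (X ω)) (fun ω => fy (Y ω)) else 0
  have hstep : ∀ i : Fin n, F (i + 1) - F i ≤
      MI μ (fun ω => X ω i) (fun ω => (fy (Y ω), Fin.take i i.isLt.le (Y ω))) := by
    intro i
    simp only [F, dif_pos (show (i : ℕ) + 1 ≤ n from i.isLt), dif_pos i.isLt.le]
    rw [MI_eq_of_comp (X' := fun ω => (X ω i, Fin.take i i.isLt.le (X ω)))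
      (fun v : Fin (i + 1) → 𝒳 => (v (Fin.last i), Fin.init v)) (fun p => Fin.snoc p.2 p.1)
      (fun _ => rfl) (fun ω => Fin.take_succ_eq_snoc i i.isLt (X ω))]
    exact MI_pair_sub_MI_le_of_condIndep (condIndep_coord_of_dist_eq_prod w hiid fy i)
  have htel : ∑ i : Fin n, (F (i + 1) - F i) = F n - F 0 := by
    rw [Fin.sum_univ_eq_sum_range (fun k => F (k + 1) - F k), Finset.sum_range_sub]
  have hF0 : F 0 = 0 := by
    simp only [F, dif_pos (Nat.zero_le n)]
    exact MI_eq_zero_of_unique _ _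
  have hFn : F n = MI μ X (fun ω => fy (Y ω)) := by
    simp only [F, dif_pos le_rfl, Fin.take_eq_self]
  linarith [Finset.sum_le_sum fun i (_ : i ∈ Finset.univ) => hstep i]

/-- Let `(X_1,Y_1), …, (X_n,Y_n)` be i.i.d. pairs of finitely-valued random variables (their
joint distribution is the `n`-fold product of a single-letter pmf `q`), and let
`F_x = f_x(X^n)`, `F_y = f_y(Y^n)`.  Then
`H(F_x | F_y) ≥ I(X^n; F_x, F_y) − Σ_{i=1}^n I(X_i; F_y, Y^{i−1})`. -/
theorem condH_ge_MI_sub_sum {Ω 𝒳 𝒴 : Type} [Fintype Ω] [Fintype 𝒳] [DecidableEq 𝒳]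
    [Fintype 𝒴] [DecidableEq 𝒴] {n Mx My : ℕ}
    (μ : FinPMF Ω) (X : Ω → Fin n → 𝒳) (Y : Ω → Fin n → 𝒴) (q : FinPMF (𝒳 × 𝒴))
    (hiid : ∀ s : Fin n → 𝒳 × 𝒴,
      dist μ (fun ω => fun i => (X ω i, Y ω i)) s = ∏ i, q.p (s i))
    (fx : (Fin n → 𝒳) → Fin Mx) (fy : (Fin n → 𝒴) → Fin My) :
    condH μ (fun ω => fx (X ω)) (fun ω => fy (Y ω)) ≥
      MI μ X (fun ω => (fx (X ω), fy (Y ω))) -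
      ∑ i : Fin n, MI μ (fun ω => X ω i)
        (fun ω => (fy (Y ω), fun j : Fin i.val => Y ω (Fin.castLE i.isLt.le j))) := by
  have hchain : MI μ X (fun ω => fy (Y ω)) ≤ ∑ i : Fin n, MI μ (fun ω => X ω i)
      (fun ω => (fy (Y ω), fun j : Fin i.val => Y ω (Fin.castLE i.isLt.le j))) :=
    MI_le_sum_MI_of_dist_eq_prod q.p hiid fy
  have hfx := MI_comp_pair_sub_MI_le_condH (μ := μ) X fx (fun ω => fy (Y ω))
  linarith

end FinPMF
end

section
/- Let X and Y be jointly distributed finitely-valued random variables and let F_x = f_x(X) and F_y = f_y(Y) for arbitrary functions f_x, f_y. Then I(Y; F_x, F_y) = I(Y; X, F_y) + I(X; F_x, F_y) − I(X; F_x, Y). -/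
open scoped BigOperators

/-!
Each mutual information unfolds into three entropies, and every joint entropy in the identity
collapses to one of `H(F_x, Y)`, `H(X, F_y)`, `H(X, Y)`, `H(F_x, F_y)`, since adjoining a
function of variables already present does not change the entropy. After these
substitutions both sides equal `H(Y) + H(F_x, F_y) - H(F_x, Y)`.
-/

namespace FinPMF

variable {Ω α β : Type} [Fintype Ω] [Fintype α] [DecidableEq α] [Fintype β] [DecidableEq β]

lemma dist_comp_of_injective (μ : FinPMF Ω) (Z : Ω → α) {g : α → β}
    (hg : Function.Injective g) (a : α) :
    dist μ (fun ω => g (Z ω)) (g a) = dist μ Z a := by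
  unfold dist
  simp only [hg.eq_iff]

lemma dist_eq_zero_of_forall_ne (μ : FinPMF Ω) (Z : Ω → α) {a : α} (h : ∀ ω, Z ω ≠ a) :
    dist μ Z a = 0 :=
  Finset.sum_eq_zero fun ω _ => if_neg (h ω)

lemma H_comp_of_injective (μ : FinPMF Ω) (Z : Ω → α) {g : α → β}
    (hg : Function.Injective g) :
    H μ (fun ω => g (Z ω)) = H μ Z := by
  unfold H
  congr 1
  refine (Fintype.sum_of_injective g hg _ _ (fun b hb => ?_) fun a => ?_).symm
  · rw [dist_eq_zero_of_forall_ne μ _ fun ω h => hb ⟨Z ω, h⟩, zero_mul]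
  · rw [dist_comp_of_injective μ Z hg]

lemma H_eq_of_comp_eq (μ : FinPMF Ω) {Z : Ω → α} {W : Ω → β} (g : β → α) (h : α → β)
    (hZ : ∀ ω, Z ω = g (W ω)) (hW : ∀ ω, W ω = h (Z ω)) :
    H μ Z = H μ W := by
  have graph_Z : H μ (fun ω => (Z ω, h (Z ω))) = H μ Z :=
    H_comp_of_injective μ Z (g := fun a => (a, h a)) fun _ _ hab => congrArg Prod.fst hab
  have graph_W : H μ (fun ω => (g (W ω), W ω)) = H μ W :=
    H_comp_of_injective μ W (g := fun b => (g b, b)) fun _ _ hab => congrArg Prod.snd hab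
  rw [← graph_Z, ← graph_W]
  simp only [← hZ, ← hW]

/-- Let `X` and `Y` be jointly distributed finitely-valued random variables and let
`F_x = f_x(X)` and `F_y = f_y(Y)`.  Then
`I(Y; F_x, F_y) = I(Y; X, F_y) + I(X; F_x, F_y) − I(X; F_x, Y)`. -/
theorem MI_decomposition {Ω 𝒳 𝒴 𝒜 ℬ : Type} [Fintype Ω] [Fintype 𝒳] [DecidableEq 𝒳]
    [Fintype 𝒴] [DecidableEq 𝒴] [Fintype 𝒜] [DecidableEq 𝒜] [Fintype ℬ] [DecidableEq ℬ]
    (μ : FinPMF Ω) (X : Ω → 𝒳) (Y : Ω → 𝒴) (fx : 𝒳 → 𝒜) (fy : 𝒴 → ℬ) :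
    MI μ Y (fun ω => (fx (X ω), fy (Y ω))) =
      MI μ Y (fun ω => (X ω, fy (Y ω))) +
      MI μ X (fun ω => (fx (X ω), fy (Y ω))) -
      MI μ X (fun ω => (fx (X ω), Y ω)) := by
  have hY_FxFy : H μ (fun ω => (Y ω, (fx (X ω), fy (Y ω)))) = H μ (fun ω => (fx (X ω), Y ω)) :=
    H_eq_of_comp_eq μ (fun p => (p.2, (p.1, fy p.2))) (fun p => (p.2.1, p.1))
      (fun _ => rfl) fun _ => rfl
  have hY_XFy : H μ (fun ω => (Y ω, (X ω, fy (Y ω)))) = H μ (fun ω => (X ω, Y ω)) :=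
    H_eq_of_comp_eq μ (fun p => (p.2, (p.1, fy p.2))) (fun p => (p.2.1, p.1))
      (fun _ => rfl) fun _ => rfl
  have hX_FxFy : H μ (fun ω => (X ω, (fx (X ω), fy (Y ω)))) = H μ (fun ω => (X ω, fy (Y ω))) :=
    H_eq_of_comp_eq μ (fun p => (p.1, (fx p.1, p.2))) (fun p => (p.1, p.2.2))
      (fun _ => rfl) fun _ => rfl
  have hX_FxY : H μ (fun ω => (X ω, (fx (X ω), Y ω))) = H μ (fun ω => (X ω, Y ω)) :=
    H_eq_of_comp_eq μ (fun p => (p.1, (fx p.1, p.2))) (fun p => (p.1, p.2.2))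
      (fun _ => rfl) fun _ => rfl
  unfold MI
  rw [hY_FxFy, hY_XFy, hX_FxFy, hX_FxY]
  ring

end FinPMF
end
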